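/- Let Ĉ(k) = H(k+1) − 2H(k) + H(k−1) with H(k) = ∑_{ℓ=0}^{L-1} h_ℓ e^{-2πi ℓ k/K}, where the h_ℓ are independent circularly symmetric complex Gaussians with variances σ_ℓ² and ∑_{ℓ=0}^{L-1} σ_ℓ² = P. Then E[|Ĉ(k)|] ≤ (2π/K)² √(2 log 4) √((P − σ_0²) ∑_{ℓ=1}^{L-1} ℓ⁴). -/

import Mathlib

open MeasureTheory ProbabilityTheory Finset Real

open scoped ENNReal NNReal

lemma aux_integral_Ioi {b : ℝ} (hb : 0 < b) :
    ∫ x in Set.Ioi (0:ℝ), x * Real.exp (-b * x ^ 2) = (2 * b)⁻¹ := by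
  have hc : (0:ℝ) < (b : ℂ).re := by simpa using hb
  have h := integral_mul_cexp_neg_mul_sq (b := (b : ℂ)) hc
  have h2 : (∫ x in Set.Ioi (0:ℝ), ((x * Real.exp (-b * x ^ 2) : ℝ) : ℂ))
      = ∫ x in Set.Ioi (0:ℝ), (x : ℂ) * Complex.exp (-(b:ℂ) * (x:ℂ) ^ 2) := by
    congr 1 with x
    push_cast [Complex.ofReal_exp]
    ring_nf
  have h2' : (((∫ x in Set.Ioi (0:ℝ), x * Real.exp (-b * x ^ 2)) : ℝ) : ℂ)
      = ∫ x in Set.Ioi (0:ℝ), (x : ℂ) * Complex.exp (-(b:ℂ) * (x:ℂ) ^ 2) :=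
    (integral_ofReal (𝕜 := ℂ)).symm.trans h2
  have h3 := h2'.trans h
  exact_mod_cast h3

lemma aux_abs_gaussian (v : ℝ≥0) :
    ∫ x, |x| ∂(gaussianReal 0 v) ≤ Real.sqrt v := by
  rcases eq_or_ne v 0 with rfl | hv
  · simp
  · rw [gaussianReal_of_var_ne_zero 0 hv]
    have hmeas : Measurable fun x => (gaussianPDFReal 0 v x).toNNReal :=
      (measurable_gaussianPDFReal 0 v).real_toNNReal
    have hd : (gaussianPDF 0 v) = fun x => ((gaussianPDFReal 0 v x).toNNReal : ℝ≥0∞) := by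
      ext x; rw [gaussianPDF_def]; rfl
    rw [hd, integral_withDensity_eq_integral_smul hmeas]
    have hpos : (0:ℝ) < (v:ℝ) := by positivity
    have hb : (0:ℝ) < (2*(v:ℝ))⁻¹ := by positivity
    have key : (fun x : ℝ => (gaussianPDFReal 0 v x).toNNReal • |x|)
        = fun x : ℝ => (Real.sqrt (2 * π * v))⁻¹ * (|x| * Real.exp (-(2*(v:ℝ))⁻¹ * |x| ^ 2)) := by
      funext x
      rw [NNReal.smul_def, Real.coe_toNNReal _ (gaussianPDFReal_nonneg 0 v x)]
      simp only [gaussianPDFReal, smul_eq_mul, sub_zero, sq_abs]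
      have hx2 : -x ^ 2 / (2 * (v:ℝ)) = -(2*(v:ℝ))⁻¹ * x ^ 2 := by ring
      rw [hx2]; ring
    rw [key, integral_const_mul, integral_comp_abs (f := fun x => x * Real.exp (-(2*(v:ℝ))⁻¹ * x ^ 2)),
      aux_integral_Ioi hb]
    have h2v : (Real.sqrt (2 * π * v))⁻¹ * (2 * ((2 * ((2:ℝ)*(v:ℝ))⁻¹))⁻¹)
        = (Real.sqrt (2 * π * v))⁻¹ * (2 * v) := by
      field_simp
    rw [h2v]
    have h4 : (2:ℝ) * Real.sqrt v ≤ Real.sqrt (2 * π * v) := by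
      have : Real.sqrt (4 * v) ≤ Real.sqrt (2 * π * v) := by
        apply Real.sqrt_le_sqrt
        nlinarith [Real.pi_gt_three, hpos]
      calc (2:ℝ) * Real.sqrt v = Real.sqrt 4 * Real.sqrt v := by
            rw [show (4:ℝ) = 2^2 by norm_num, Real.sqrt_sq (by norm_num)]
        _ = Real.sqrt (4 * v) := (Real.sqrt_mul (by norm_num) _).symm
        _ ≤ _ := this
    have hs : (0:ℝ) < Real.sqrt v := Real.sqrt_pos.mpr hpos
    rw [inv_mul_le_iff₀ (lt_of_lt_of_le (by linarith) h4)]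
    calc (2:ℝ) * v = Real.sqrt v * (2 * Real.sqrt v) := by
          rw [← mul_assoc, mul_comm (Real.sqrt v) 2, mul_assoc, Real.mul_self_sqrt hpos.le]
      _ ≤ Real.sqrt v * Real.sqrt (2 * π * v) := mul_le_mul_of_nonneg_left h4 hs.le
      _ = Real.sqrt (2 * π * ↑v) * Real.sqrt v := mul_comm _ _

lemma aux_integrable_id_gaussian (v : ℝ≥0) :
    Integrable (fun x : ℝ => x) (gaussianReal 0 v) := by
  rcases eq_or_ne v 0 with rfl | hv
  · rw [gaussianReal_zero_var]
    have hae : (fun _ : ℝ => (0:ℝ)) =ᵐ[Measure.dirac (0:ℝ)] fun x : ℝ => x := by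
      filter_upwards [MeasureTheory.ae_eq_dirac (fun x : ℝ => x)] with x hx
      simpa using hx.symm
    exact (integrable_const (0:ℝ)).congr hae
  · rw [gaussianReal_of_var_ne_zero 0 hv]
    have hmeas : Measurable fun x => (gaussianPDFReal 0 v x).toNNReal :=
      (measurable_gaussianPDFReal 0 v).real_toNNReal
    have hd : (gaussianPDF 0 v) = fun x => ((gaussianPDFReal 0 v x).toNNReal : ℝ≥0∞) := by
      ext x; rw [gaussianPDF_def]; rfl
    rw [hd, integrable_withDensity_iff_integrable_smul hmeas]
    have hb : (0:ℝ) < (2*(v:ℝ))⁻¹ := by positivity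
    have key : (fun x : ℝ => (gaussianPDFReal 0 v x).toNNReal • x)
        = fun x : ℝ => (Real.sqrt (2 * π * v))⁻¹ * (x * Real.exp (-(2*(v:ℝ))⁻¹ * x ^ 2)) := by
      funext x
      rw [NNReal.smul_def, Real.coe_toNNReal _ (gaussianPDFReal_nonneg 0 v x)]
      simp only [gaussianPDFReal, smul_eq_mul, sub_zero]
      have hx2 : -x ^ 2 / (2 * (v:ℝ)) = -(2*(v:ℝ))⁻¹ * x ^ 2 := by ring
      rw [hx2]; ring
    rw [key]
    exact (integrable_mul_exp_neg_mul_sq hb).const_mul _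

/-- The discrete curvature `Ĉ(k) = H(k+1) − 2H(k) + H(k−1)` of the frequency-domain
channel with independent circularly symmetric complex Gaussian taps of variances `σ_ℓ²`
(summing to `P`) satisfies `E[|Ĉ(k)|] ≤ (2π/K)² √(2 log 4) √((P − σ_0²) ∑ ℓ⁴)`. -/
theorem second_difference_abs_expectation_le
    {Ω : Type*} [MeasurableSpace Ω] {μ : Measure Ω} [IsProbabilityMeasure μ]
    (K L : ℕ) (hK : 2 ≤ K) (hL : 2 ≤ L) (k : ℤ)
    (σ : ℕ → ℝ) (hσ : ∀ ℓ, 0 ≤ σ ℓ) (P : ℝ)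
    (hP : P = ∑ ℓ ∈ Finset.range L, σ ℓ ^ 2)
    (X Y : ℕ → Ω → ℝ) (hX : ∀ ℓ, Measurable (X ℓ)) (hY : ∀ ℓ, Measurable (Y ℓ))
    (h : ℕ → Ω → ℂ) (hdef : ∀ ℓ ω, h ℓ ω = X ℓ ω + Complex.I * Y ℓ ω)
    (hXY : ∀ ℓ, IndepFun (X ℓ) (Y ℓ) μ)
    (hXlaw : ∀ ℓ, Measure.map (X ℓ) μ = gaussianReal 0 (Real.toNNReal (σ ℓ ^ 2 / 2)))
    (hYlaw : ∀ ℓ, Measure.map (Y ℓ) μ = gaussianReal 0 (Real.toNNReal (σ ℓ ^ 2 / 2)))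
    (hindep : iIndepFun h μ)
    (H : Ω → ℤ → ℂ)
    (hH : ∀ ω (j : ℤ), H ω j = ∑ ℓ ∈ Finset.range L,
      h ℓ ω * Complex.exp (-2 * π * Complex.I * ℓ * j / K)) :
    (∫ ω, ‖H ω (k + 1) - 2 * H ω k + H ω (k - 1)‖ ∂μ) ≤
      (2 * π / K) ^ 2 * Real.sqrt (2 * Real.log 4) *
        Real.sqrt ((P - σ 0 ^ 2) * ∑ ℓ ∈ Finset.Ico 1 L, (ℓ : ℝ) ^ 4) := by
  have hK0 : (0:ℝ) < (K:ℝ) := by positivity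
  -- pointwise bound
  have hpt : ∀ ω, ‖H ω (k + 1) - 2 * H ω k + H ω (k - 1)‖ ≤
      ∑ ℓ ∈ Finset.range L, (2 * π / K) ^ 2 * (ℓ:ℝ) ^ 2 * ‖h ℓ ω‖ := by
    intro ω
    have hsplit : ∀ (ℓ : ℕ) (j : ℤ), Complex.exp (-2 * π * Complex.I * ℓ * j / K)
        = Complex.exp (((-2 * π * ℓ * j / K : ℝ) : ℂ) * Complex.I) := by
      intro ℓ j; congr 1; push_cast; ring
    rw [hH, hH, hH]
    simp only [hsplit]
    rw [Finset.mul_sum, ← Finset.sum_sub_distrib, ← Finset.sum_add_distrib]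
    refine (norm_sum_le _ _).trans (Finset.sum_le_sum fun ℓ hℓ => ?_)
    set w : ℝ := 2 * π * ℓ / K with hw
    set r : ℝ := -2 * π * ℓ * k / K with hr
    have h1 : ((-2 * π * (ℓ:ℝ) * ((k+1 : ℤ):ℝ) / K : ℝ) : ℂ) * Complex.I
        = (r : ℂ) * Complex.I + ((-w : ℝ) : ℂ) * Complex.I := by
      rw [hw, hr]; push_cast; ring
    have h2 : ((-2 * π * (ℓ:ℝ) * ((k-1 : ℤ):ℝ) / K : ℝ) : ℂ) * Complex.I
        = (r : ℂ) * Complex.I + ((w : ℝ) : ℂ) * Complex.I := by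
      rw [hw, hr]; push_cast; ring
    rw [h1, h2, Complex.exp_add, Complex.exp_add]
    have hT : h ℓ ω * (Complex.exp ((r:ℂ) * Complex.I) * Complex.exp (((-w : ℝ):ℂ) * Complex.I))
          - 2 * (h ℓ ω * Complex.exp ((r:ℂ) * Complex.I))
          + h ℓ ω * (Complex.exp ((r:ℂ) * Complex.I) * Complex.exp (((w : ℝ):ℂ) * Complex.I))
        = h ℓ ω * Complex.exp ((r:ℂ) * Complex.I) * ((2 * Real.cos w - 2 : ℝ) : ℂ) := by
      simp only [Complex.exp_mul_I]
      push_cast [Complex.cos_neg, Complex.sin_neg]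
      ring
    rw [hT, norm_mul, norm_mul, Complex.norm_exp_ofReal_mul_I, Complex.norm_real, Real.norm_eq_abs, mul_one]
    have hcosb : |2 * Real.cos w - 2| ≤ (2 * π / K) ^ 2 * (ℓ:ℝ) ^ 2 := by
      rw [abs_of_nonpos (by nlinarith [Real.cos_le_one w])]
      have hq := Real.one_sub_sq_div_two_le_cos (x := w)
      have hw2 : w ^ 2 = (2 * π / K) ^ 2 * (ℓ:ℝ) ^ 2 := by rw [hw]; field_simp
      nlinarith
    calc ‖h ℓ ω‖ * |2 * Real.cos w - 2|
        ≤ ‖h ℓ ω‖ * ((2 * π / K) ^ 2 * (ℓ:ℝ) ^ 2) :=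
          mul_le_mul_of_nonneg_left hcosb (norm_nonneg _)
      _ = (2 * π / K) ^ 2 * (ℓ:ℝ) ^ 2 * ‖h ℓ ω‖ := by ring
  -- integrability and moment bounds for each tap
  have hIntX : ∀ ℓ, Integrable (X ℓ) μ := by
    intro ℓ
    have h1 := aux_integrable_id_gaussian (Real.toNNReal (σ ℓ ^ 2 / 2))
    rw [← hXlaw ℓ] at h1
    exact (integrable_map_measure aestronglyMeasurable_id (hX ℓ).aemeasurable).mp h1
  have hIntY : ∀ ℓ, Integrable (Y ℓ) μ := by
    intro ℓ
    have h1 := aux_integrable_id_gaussian (Real.toNNReal (σ ℓ ^ 2 / 2))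
    rw [← hYlaw ℓ] at h1
    exact (integrable_map_measure aestronglyMeasurable_id (hY ℓ).aemeasurable).mp h1
  have hvco : ∀ ℓ, ((Real.toNNReal (σ ℓ ^ 2 / 2) : ℝ≥0) : ℝ) = σ ℓ ^ 2 / 2 := fun ℓ =>
    Real.coe_toNNReal _ (by positivity)
  have hEX : ∀ ℓ, ∫ ω, |X ℓ ω| ∂μ ≤ Real.sqrt (σ ℓ ^ 2 / 2) := by
    intro ℓ
    have h1 : ∫ ω, |X ℓ ω| ∂μ = ∫ x, |x| ∂(Measure.map (X ℓ) μ) :=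
      (integral_map (hX ℓ).aemeasurable continuous_abs.aestronglyMeasurable).symm
    rw [h1, hXlaw ℓ]
    have := aux_abs_gaussian (Real.toNNReal (σ ℓ ^ 2 / 2))
    rwa [hvco ℓ] at this
  have hEY : ∀ ℓ, ∫ ω, |Y ℓ ω| ∂μ ≤ Real.sqrt (σ ℓ ^ 2 / 2) := by
    intro ℓ
    have h1 : ∫ ω, |Y ℓ ω| ∂μ = ∫ x, |x| ∂(Measure.map (Y ℓ) μ) :=
      (integral_map (hY ℓ).aemeasurable continuous_abs.aestronglyMeasurable).symm
    rw [h1, hYlaw ℓ]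
    have := aux_abs_gaussian (Real.toNNReal (σ ℓ ^ 2 / 2))
    rwa [hvco ℓ] at this
  have habsle : ∀ ℓ ω, ‖h ℓ ω‖ ≤ |X ℓ ω| + |Y ℓ ω| := by
    intro ℓ ω
    rw [hdef ℓ ω]
    refine (norm_add_le _ _).trans ?_
    rw [Complex.norm_real, norm_mul, Complex.norm_I, Complex.norm_real, one_mul, Real.norm_eq_abs, Real.norm_eq_abs]
  have hIabs : ∀ ℓ, Integrable (fun ω => ‖h ℓ ω‖) μ := by
    intro ℓ
    have hm : Measurable (h ℓ) := by
      have : h ℓ = fun ω => (X ℓ ω : ℂ) + Complex.I * (Y ℓ ω : ℂ) := funext (hdef ℓ)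
      rw [this]
      exact (Complex.measurable_ofReal.comp (hX ℓ)).add
        (measurable_const.mul (Complex.measurable_ofReal.comp (hY ℓ)))
    refine Integrable.mono' ((hIntX ℓ).abs.add (hIntY ℓ).abs)
      ((continuous_norm.measurable).comp hm).aestronglyMeasurable (ae_of_all _ fun ω => ?_)
    rw [Real.norm_eq_abs, abs_of_nonneg (norm_nonneg _)]
    exact habsle ℓ ω
  have hsqrt2 : Real.sqrt 2 * Real.sqrt 2 = 2 := Real.mul_self_sqrt (by norm_num)
  have hbound : ∀ ℓ, ∫ ω, ‖h ℓ ω‖ ∂μ ≤ Real.sqrt 2 * σ ℓ := by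
    intro ℓ
    have h1 : ∫ ω, ‖h ℓ ω‖ ∂μ ≤ ∫ ω, (|X ℓ ω| + |Y ℓ ω|) ∂μ :=
      integral_mono (hIabs ℓ) ((hIntX ℓ).abs.add (hIntY ℓ).abs) (fun ω => habsle ℓ ω)
    rw [integral_add (hIntX ℓ).abs (hIntY ℓ).abs] at h1
    have h2 : Real.sqrt (σ ℓ ^ 2 / 2) = σ ℓ / Real.sqrt 2 := by
      rw [show σ ℓ ^ 2 / 2 = (σ ℓ / Real.sqrt 2) ^ 2 by
        rw [div_pow, Real.sq_sqrt (by norm_num : (0:ℝ) ≤ 2)]]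
      exact Real.sqrt_sq (div_nonneg (hσ ℓ) (Real.sqrt_nonneg 2))
    have h3 : Real.sqrt (σ ℓ ^ 2 / 2) + Real.sqrt (σ ℓ ^ 2 / 2) = Real.sqrt 2 * σ ℓ := by
      rw [h2]
      have hs2 : (0:ℝ) < Real.sqrt 2 := by positivity
      field_simp
      nlinarith [hsqrt2, hσ ℓ]
    linarith [hEX ℓ, hEY ℓ]
  -- main chain
  have hIg : Integrable (fun ω => ∑ ℓ ∈ Finset.range L,
      (2 * π / K) ^ 2 * (ℓ:ℝ) ^ 2 * ‖h ℓ ω‖) μ :=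
    integrable_finset_sum _ fun ℓ _ => (hIabs ℓ).const_mul _
  have step1 : (∫ ω, ‖H ω (k + 1) - 2 * H ω k + H ω (k - 1)‖ ∂μ) ≤
      ∑ ℓ ∈ Finset.range L, (2 * π / K) ^ 2 * (ℓ:ℝ) ^ 2 * ∫ ω, ‖h ℓ ω‖ ∂μ := by
    refine le_trans (integral_mono_of_nonneg (ae_of_all _ fun ω => norm_nonneg _)
      hIg (ae_of_all _ hpt)) ?_
    rw [integral_finset_sum _ fun ℓ _ => (hIabs ℓ).const_mul _]
    refine le_of_eq (Finset.sum_congr rfl fun ℓ _ => ?_)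
    rw [integral_const_mul]
  have step2 : ∑ ℓ ∈ Finset.range L, (2 * π / K) ^ 2 * (ℓ:ℝ) ^ 2 * ∫ ω, ‖h ℓ ω‖ ∂μ
      ≤ (2 * π / K) ^ 2 * Real.sqrt 2 * ∑ ℓ ∈ Finset.Ico 1 L, (ℓ:ℝ) ^ 2 * σ ℓ := by
    have : ∑ ℓ ∈ Finset.range L, (2 * π / K) ^ 2 * (ℓ:ℝ) ^ 2 * ∫ ω, ‖h ℓ ω‖ ∂μ
        ≤ ∑ ℓ ∈ Finset.range L, (2 * π / K) ^ 2 * (ℓ:ℝ) ^ 2 * (Real.sqrt 2 * σ ℓ) :=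
      Finset.sum_le_sum fun ℓ _ => mul_le_mul_of_nonneg_left (hbound ℓ) (by positivity)
    refine this.trans (le_of_eq ?_)
    rw [Finset.range_eq_Ico, Finset.sum_eq_sum_Ico_succ_bot (by omega : 0 < L)]
    rw [Finset.mul_sum]
    simp only [Nat.cast_zero]
    rw [show (2 * π / (K:ℝ)) ^ 2 * (0:ℝ) ^ 2 * (Real.sqrt 2 * σ 0) = 0 by ring, zero_add]
    exact Finset.sum_congr rfl fun ℓ _ => by ring
  have hP' : ∑ ℓ ∈ Finset.Ico 1 L, σ ℓ ^ 2 = P - σ 0 ^ 2 := by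
    rw [hP, Finset.range_eq_Ico, Finset.sum_eq_sum_Ico_succ_bot (by omega : 0 < L)]
    ring
  have hcs : ∑ ℓ ∈ Finset.Ico 1 L, (ℓ:ℝ) ^ 2 * σ ℓ
      ≤ Real.sqrt ((P - σ 0 ^ 2) * ∑ ℓ ∈ Finset.Ico 1 L, (ℓ:ℝ) ^ 4) := by
    have cs := Finset.sum_mul_sq_le_sq_mul_sq (Finset.Ico 1 L) (fun ℓ => (ℓ:ℝ) ^ 2) σ
    have hnn : 0 ≤ ∑ ℓ ∈ Finset.Ico 1 L, (ℓ:ℝ) ^ 2 * σ ℓ :=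
      Finset.sum_nonneg fun ℓ _ => mul_nonneg (by positivity) (hσ ℓ)
    rw [← Real.sqrt_sq hnn]
    apply Real.sqrt_le_sqrt
    have e1 : ∑ ℓ ∈ Finset.Ico 1 L, (((ℓ:ℝ)) ^ 2) ^ 2 = ∑ ℓ ∈ Finset.Ico 1 L, (ℓ:ℝ) ^ 4 :=
      Finset.sum_congr rfl fun ℓ _ => by ring
    calc (∑ ℓ ∈ Finset.Ico 1 L, (ℓ:ℝ) ^ 2 * σ ℓ) ^ 2
        ≤ (∑ ℓ ∈ Finset.Ico 1 L, ((ℓ:ℝ) ^ 2) ^ 2) * ∑ ℓ ∈ Finset.Ico 1 L, σ ℓ ^ 2 := cs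
      _ = (P - σ 0 ^ 2) * ∑ ℓ ∈ Finset.Ico 1 L, (ℓ:ℝ) ^ 4 := by rw [e1, hP', mul_comm]
  have hlog : Real.sqrt 2 ≤ Real.sqrt (2 * Real.log 4) := by
    apply Real.sqrt_le_sqrt
    have h4 : (1:ℝ) ≤ Real.log 4 := by
      rw [Real.le_log_iff_exp_le (by norm_num : (0:ℝ) < 4)]
      calc Real.exp 1 ≤ 2.7182818286 := Real.exp_one_lt_d9.le
        _ ≤ 4 := by norm_num
    linarith
  calc (∫ ω, ‖H ω (k + 1) - 2 * H ω k + H ω (k - 1)‖ ∂μ)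
      ≤ ∑ ℓ ∈ Finset.range L, (2 * π / K) ^ 2 * (ℓ:ℝ) ^ 2 * ∫ ω, ‖h ℓ ω‖ ∂μ := step1
    _ ≤ (2 * π / K) ^ 2 * Real.sqrt 2 * ∑ ℓ ∈ Finset.Ico 1 L, (ℓ:ℝ) ^ 2 * σ ℓ := step2
    _ ≤ (2 * π / K) ^ 2 * Real.sqrt 2 *
        Real.sqrt ((P - σ 0 ^ 2) * ∑ ℓ ∈ Finset.Ico 1 L, (ℓ:ℝ) ^ 4) :=
      mul_le_mul_of_nonneg_left hcs (by positivity)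
    _ ≤ (2 * π / K) ^ 2 * Real.sqrt (2 * Real.log 4) *
        Real.sqrt ((P - σ 0 ^ 2) * ∑ ℓ ∈ Finset.Ico 1 L, (ℓ:ℝ) ^ 4) := by
      refine mul_le_mul_of_nonneg_right ?_ (Real.sqrt_nonneg _)
      exact mul_le_mul_of_nonneg_left hlog (by positivity)
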